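/- Let α ∈ (0,1), let X be a real Banach space, let t₁ < t₂ < ⋯ < t_N be real numbers with k_j = t_j − t_{j−1} for j ≥ 2, and let W₂, …, W_N ∈ X. Define p : [t₁, t_N] → X by p(s) = (s − (t_{j−1} + t_j)/2) · W_j for s ∈ (t_{j−1}, t_j], j = 2, …, N. Then for every n ∈ {2, …, N} and every t ∈ (t_{n−1}, t_n], (1/Γ(1−α)) ∫_{t₁}^t (t−s)^{−α} p(s) ds = −Σ_{j=2}^{n−1} [ (k_j/(2Γ(2−α))) ((t−t_j)^{1−α} + (t−t_{j−1})^{1−α}) + (1/Γ(3−α)) ((t−t_j)^{2−α} − (t−t_{j−1})^{2−α}) ] W_j − (k_n/(2Γ(2−α))) (t−t_{n−1})^{1−α} W_n + ((t−t_{n−1})^{2−α}/Γ(3−α)) W_n. -/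
import Mathlib

open MeasureTheory Set intervalIntegral

lemma intInt_rpow_shift {r : ℝ} (hr : -1 < r) (τ a b : ℝ) :
    IntervalIntegrable (fun s => (τ - s) ^ r) volume a b := by
  have := (intervalIntegral.intervalIntegrable_rpow'
    (a := τ - a) (b := τ - b) hr).comp_sub_left τ
  simpa using this

lemma integral_rpow_shift {r : ℝ} (hr : -1 < r) (τ a b : ℝ) :
    ∫ s in a..b, (τ - s) ^ r = ((τ - a) ^ (r + 1) - (τ - b) ^ (r + 1)) / (r + 1) := by
  rw [intervalIntegral.integral_comp_sub_left (fun u => u ^ r) τ,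
    integral_rpow (Or.inl hr)]

lemma rpow_two_sub {α : ℝ} (hα : α ∈ Set.Ioo (0:ℝ) 1) {A : ℝ} (hA : 0 ≤ A) :
    A ^ (2 - α) = A ^ (1 - α) * A := by
  rcases hA.eq_or_lt with h | h
  · rw [← h, Real.zero_rpow (by linarith [hα.2] : (2:ℝ) - α ≠ 0), mul_zero]
  · rw [show (2:ℝ) - α = (1 - α) + 1 by ring, Real.rpow_add_one h.ne']

lemma key_scalar {α : ℝ} (hα : α ∈ Set.Ioo (0:ℝ) 1) (τ a b c : ℝ)
    (hab : a ≤ b) (hbτ : b ≤ τ) :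
    ∫ s in a..b, (τ - s) ^ (-α) * (s - c)
      = (τ - c) * (((τ - a) ^ (1 - α) - (τ - b) ^ (1 - α)) / (1 - α))
        - ((τ - a) ^ (2 - α) - (τ - b) ^ (2 - α)) / (2 - α) := by
  have h1 : (-1:ℝ) < -α := by linarith [hα.2]
  have h2 : (-1:ℝ) < 1 - α := by linarith [hα.2]
  have hcong : Set.EqOn (fun s => (τ - s) ^ (-α) * (s - c))
      (fun s => (τ - c) * (τ - s) ^ (-α) - (τ - s) ^ (1 - α)) (Set.uIcc a b) := by
    intro s hs
    rw [Set.uIcc_of_le hab] at hs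
    have hsτ : 0 ≤ τ - s := by linarith [hs.2]
    have e : (τ - s) ^ (1 - α) = (τ - s) ^ (-α) * (τ - s) := by
      rcases hsτ.eq_or_lt with h | h
      · rw [← h, Real.zero_rpow (by linarith [hα.2] : (1:ℝ) - α ≠ 0), mul_zero]
      · rw [show (1:ℝ) - α = -α + 1 by ring, Real.rpow_add_one h.ne']
    simp only [e]
    ring
  rw [intervalIntegral.integral_congr hcong,
    intervalIntegral.integral_sub ((intInt_rpow_shift h1 τ a b).const_mul _)
      (intInt_rpow_shift h2 τ a b),
    intervalIntegral.integral_const_mul, integral_rpow_shift h1, integral_rpow_shift h2,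
    show (-α + 1 : ℝ) = 1 - α by ring, show (1 - α + 1 : ℝ) = 2 - α by ring]

lemma key_vec {X : Type*} [NormedAddCommGroup X] [NormedSpace ℝ X] [CompleteSpace X]
    {α : ℝ} (hα : α ∈ Set.Ioo (0:ℝ) 1) (τ a b c : ℝ)
    (hab : a ≤ b) (hbτ : b ≤ τ) (w : X) :
    ∫ s in a..b, ((τ - s) ^ (-α) * (s - c)) • w
      = ((τ - c) * (((τ - a) ^ (1 - α) - (τ - b) ^ (1 - α)) / (1 - α))
        - ((τ - a) ^ (2 - α) - (τ - b) ^ (2 - α)) / (2 - α)) • w := by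
  rw [intervalIntegral.integral_smul_const, key_scalar hα τ a b c hab hbτ]

/-- Caputo-type fractional derivative of the piecewise quadratic reconstruction
increment: if `p(s) = (s - (t_{j-1}+t_j)/2) • W_j` on `(t_{j-1}, t_j]` for
`j = 2,…,N`, then for every `n ∈ {2,…,N}` and `τ ∈ (t_{n-1}, t_n]`,
`(1/Γ(1-α)) ∫_{t₁}^τ (τ-s)^(-α) p(s) ds
  = -∑_{j=2}^{n-1} [ (k_j/(2Γ(2-α))) ((τ-t_j)^(1-α) + (τ-t_{j-1})^(1-α))
      + (1/Γ(3-α)) ((τ-t_j)^(2-α) - (τ-t_{j-1})^(2-α)) ] W_j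
    - (k_n/(2Γ(2-α))) (τ-t_{n-1})^(1-α) W_n + ((τ-t_{n-1})^(2-α)/Γ(3-α)) W_n`. -/
theorem caputo_piecewise_quadratic_increment
    {X : Type*} [NormedAddCommGroup X] [NormedSpace ℝ X] [CompleteSpace X]
    (α : ℝ) (hα : α ∈ Set.Ioo (0 : ℝ) 1)
    (N : ℕ) (hN : 2 ≤ N)
    (t : ℕ → ℝ) (hmono : ∀ j, 1 ≤ j → j < N → t j < t (j + 1))
    (W : ℕ → X) (p : ℝ → X)
    (hp : ∀ j, 2 ≤ j → j ≤ N → ∀ s ∈ Set.Ioc (t (j - 1)) (t j),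
      p s = (s - (t (j - 1) + t j) / 2) • W j) :
    ∀ n, 2 ≤ n → n ≤ N → ∀ τ ∈ Set.Ioc (t (n - 1)) (t n),
      (1 / Real.Gamma (1 - α)) • (∫ s in (t 1)..τ, ((τ - s) ^ (-α)) • p s)
        = -(∑ j ∈ Finset.Icc 2 (n - 1),
              (((t j - t (j - 1)) / (2 * Real.Gamma (2 - α)))
                  * ((τ - t j) ^ (1 - α) + (τ - t (j - 1)) ^ (1 - α))
                + (1 / Real.Gamma (3 - α))
                  * ((τ - t j) ^ (2 - α) - (τ - t (j - 1)) ^ (2 - α))) • W j)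
          - (((t n - t (n - 1)) / (2 * Real.Gamma (2 - α)))
              * (τ - t (n - 1)) ^ (1 - α)) • W n
          + ((τ - t (n - 1)) ^ (2 - α) / Real.Gamma (3 - α)) • W n := by
  obtain ⟨hα0, hα1⟩ := hα
  have h1 : (-1:ℝ) < -α := by linarith
  have h1α : (1:ℝ) - α ≠ 0 := by linarith
  have h2α : (2:ℝ) - α ≠ 0 := by linarith
  have hΓ1 : Real.Gamma (1 - α) ≠ 0 := (Real.Gamma_pos_of_pos (by linarith)).ne'
  have hΓ2 : Real.Gamma (2 - α) = (1 - α) * Real.Gamma (1 - α) := by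
    rw [show (2:ℝ) - α = (1 - α) + 1 by ring, Real.Gamma_add_one (by linarith)]
  have hΓ3 : Real.Gamma (3 - α) = (2 - α) * ((1 - α) * Real.Gamma (1 - α)) := by
    rw [show (3:ℝ) - α = (2 - α) + 1 by ring, Real.Gamma_add_one (by linarith), hΓ2]
  have hle : ∀ i j, 1 ≤ i → i ≤ j → j ≤ N → t i ≤ t j := by
    intro i j h1i hij hjN
    induction j, hij using Nat.le_induction with
    | base => exact le_rfl
    | succ j hij ih =>
        exact le_trans (ih (by omega)) (hmono j (by omega) (by omega)).le
  intro n hn2 hnN τ hτ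
  have hτ1 : t (n - 1) < τ := hτ.1
  set f : ℝ → X := fun s => ((τ - s) ^ (-α)) • p s with hfdef
  have hEs : ∀ j, 2 ≤ j → j ≤ n → ∀ b, b ≤ t j →
      Set.EqOn (fun s => ((τ - s) ^ (-α) * (s - (t (j - 1) + t j) / 2)) • W j) f
        (Set.Ioc (t (j - 1)) b) := by
    intro j hj2 hjn b hb2 s hs
    have hps : p s = (s - (t (j - 1) + t j) / 2) • W j :=
      hp j hj2 (le_trans hjn hnN) s ⟨hs.1, le_trans hs.2 hb2⟩
    simp only [f, hps, smul_smul]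
  have hint : ∀ j, 2 ≤ j → j ≤ n → ∀ b, t (j - 1) < b → b ≤ t j →
      IntervalIntegrable f volume (t (j - 1)) b := by
    intro j hj2 hjn b hb1 hb2
    have hg : IntervalIntegrable (fun s => (τ - s) ^ (-α) * (s - (t (j - 1) + t j) / 2))
        volume (t (j - 1)) b :=
      (intInt_rpow_shift h1 τ _ _).mul_continuousOn (by fun_prop)
    have hnice : IntervalIntegrable
        (fun s => ((τ - s) ^ (-α) * (s - (t (j - 1) + t j) / 2)) • W j)
        volume (t (j - 1)) b := ⟨hg.1.smul_const _, hg.2.smul_const _⟩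
    rw [intervalIntegrable_iff, Set.uIoc_of_le hb1.le] at hnice ⊢
    exact hnice.congr_fun (hEs j hj2 hjn b hb2) measurableSet_Ioc
  have hseg : ∀ j, 2 ≤ j → j ≤ n → ∀ b, t (j - 1) < b → b ≤ t j → b ≤ τ →
      ∫ s in t (j - 1)..b, f s
        = ((τ - (t (j - 1) + t j) / 2)
              * (((τ - t (j - 1)) ^ (1 - α) - (τ - b) ^ (1 - α)) / (1 - α))
            - ((τ - t (j - 1)) ^ (2 - α) - (τ - b) ^ (2 - α)) / (2 - α)) • W j := by
    intro j hj2 hjn b hb1 hb2 hbτ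
    rw [← key_vec ⟨hα0, hα1⟩ τ (t (j - 1)) b ((t (j - 1) + t j) / 2) hb1.le hbτ (W j),
      intervalIntegral.integral_of_le hb1.le, intervalIntegral.integral_of_le hb1.le]
    exact (setIntegral_congr_fun measurableSet_Ioc (hEs j hj2 hjn b hb2)).symm
  have hbig : ∀ m, 1 ≤ m → m ≤ n - 1 → IntervalIntegrable f volume (t 1) (t m) := by
    intro m hm1 hmn
    induction m, hm1 using Nat.le_induction with
    | base => exact IntervalIntegrable.refl
    | succ m hm ih =>
        exact (ih (by omega)).trans
          (hint (m + 1) (by omega) (by omega) (t (m + 1)) (hmono m (by omega) (by omega)) le_rfl)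
  have hsum : ∀ m, 1 ≤ m → m ≤ n - 1 →
      ∫ s in (t 1)..(t m), f s = ∑ j ∈ Finset.Icc 2 m, ∫ s in t (j - 1)..t j, f s := by
    intro m hm1 hmn
    induction m, hm1 using Nat.le_induction with
    | base =>
        rw [Finset.Icc_eq_empty (by omega), Finset.sum_empty, intervalIntegral.integral_same]
    | succ m hm ih =>
        rw [← intervalIntegral.integral_add_adjacent_intervals
            (hbig m (by omega) (by omega))
            (hint (m + 1) (by omega) (by omega) (t (m + 1)) (hmono m (by omega) (by omega))
              le_rfl),
          ih (by omega), Finset.sum_Icc_succ_top (by omega)]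
        norm_num
  have hsplit : ∫ s in (t 1)..τ, f s = (∫ s in (t 1)..(t (n - 1)), f s) + ∫ s in t (n - 1)..τ, f s :=
    (intervalIntegral.integral_add_adjacent_intervals (hbig (n - 1) (by omega) le_rfl)
      (hint n hn2 le_rfl τ hτ1 hτ.2)).symm
  have hmid : ∀ j ∈ Finset.Icc 2 (n - 1), ∫ s in t (j - 1)..t j, f s
      = ((τ - (t (j - 1) + t j) / 2)
            * (((τ - t (j - 1)) ^ (1 - α) - (τ - t j) ^ (1 - α)) / (1 - α))
          - ((τ - t (j - 1)) ^ (2 - α) - (τ - t j) ^ (2 - α)) / (2 - α)) • W j := by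
    intro j hj
    rw [Finset.mem_Icc] at hj
    have hj' : j - 1 + 1 = j := by omega
    have hlt : t (j - 1) < t j := by
      have := hmono (j - 1) (by omega) (by omega); rwa [hj'] at this
    have hjτ : t j ≤ τ :=
      (lt_of_le_of_lt (hle j (n - 1) (by omega) hj.2 (by omega)) hτ1).le
    exact hseg j hj.1 (by omega) (t j) hlt le_rfl hjτ
  rw [hsplit, hsum (n - 1) (by omega) le_rfl, Finset.sum_congr rfl hmid,
    hseg n hn2 le_rfl τ hτ1 hτ.2 le_rfl, smul_add, Finset.smul_sum]
  have hmidid : ∀ j ∈ Finset.Icc 2 (n - 1),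
      (1 / Real.Gamma (1 - α)) • (((τ - (t (j - 1) + t j) / 2)
            * (((τ - t (j - 1)) ^ (1 - α) - (τ - t j) ^ (1 - α)) / (1 - α))
          - ((τ - t (j - 1)) ^ (2 - α) - (τ - t j) ^ (2 - α)) / (2 - α)) • W j)
        = -((((t j - t (j - 1)) / (2 * Real.Gamma (2 - α)))
              * ((τ - t j) ^ (1 - α) + (τ - t (j - 1)) ^ (1 - α))
            + (1 / Real.Gamma (3 - α))
              * ((τ - t j) ^ (2 - α) - (τ - t (j - 1)) ^ (2 - α))) • W j) := by
    intro j hj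
    rw [Finset.mem_Icc] at hj
    have hj' : j - 1 + 1 = j := by omega
    have hlt : t (j - 1) < t j := by
      have := hmono (j - 1) (by omega) (by omega); rwa [hj'] at this
    have hjτ : t j ≤ τ :=
      (lt_of_le_of_lt (hle j (n - 1) (by omega) hj.2 (by omega)) hτ1).le
    have hB : (0:ℝ) ≤ τ - t j := by linarith
    have hA : (0:ℝ) ≤ τ - t (j - 1) := by linarith
    rw [smul_smul, ← neg_smul]
    congr 1
    rw [hΓ2, hΓ3, rpow_two_sub ⟨hα0, hα1⟩ hA, rpow_two_sub ⟨hα0, hα1⟩ hB,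
      show τ - (t (j - 1) + t j) / 2 = ((τ - t (j - 1)) + (τ - t j)) / 2 by ring,
      show t j - t (j - 1) = (τ - t (j - 1)) - (τ - t j) by ring]
    generalize (τ - t (j - 1)) ^ (1 - α) = x
    generalize (τ - t j) ^ (1 - α) = y
    field_simp
    ring
  rw [Finset.sum_congr rfl hmidid, Finset.sum_neg_distrib]
  have hA : (0:ℝ) ≤ τ - t (n - 1) := by linarith
  have hlastid : (1 / Real.Gamma (1 - α)) • (((τ - (t (n - 1) + t n) / 2)
          * (((τ - t (n - 1)) ^ (1 - α) - (τ - τ) ^ (1 - α)) / (1 - α))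
        - ((τ - t (n - 1)) ^ (2 - α) - (τ - τ) ^ (2 - α)) / (2 - α)) • W n)
      = -((((t n - t (n - 1)) / (2 * Real.Gamma (2 - α)))
            * (τ - t (n - 1)) ^ (1 - α)) • W n)
        + ((τ - t (n - 1)) ^ (2 - α) / Real.Gamma (3 - α)) • W n := by
    rw [smul_smul, ← neg_smul, ← add_smul]
    congr 1
    rw [sub_self, Real.zero_rpow h1α, Real.zero_rpow h2α, hΓ2, hΓ3,
      rpow_two_sub ⟨hα0, hα1⟩ hA,
      show τ - (t (n - 1) + t n) / 2 = (τ - t (n - 1)) - (t n - t (n - 1)) / 2 by ring]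
    generalize (τ - t (n - 1)) ^ (1 - α) = x
    field_simp
    ring
  rw [hlastid]
  abel
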